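/- arXiv:1401.0777 — 3 statements merged into one kernel-verified Lean document; each statement's English description precedes it below -/
import Mathlib

section
/- Let (H^q)_{q∈Z} be a family of finite-dimensional Z₂-vector spaces indexed by integers, zero for q < 0 and q > n, where n ≡ 2 (mod 3), n ≥ 5. Set d = (2n−1)/3 (an odd integer). Suppose for every q there is an exact sequence H^{q+d} → H^q → H^{q−d} of Z₂-vector spaces (with the maps composable into a long exact pattern, i.e. ⊕_q of the homology of these three-term complexes vanishes), H⁰ ≅ Z₂, and H^n ≅ Z₂, and dim H^q = dim H^{n−q} for all q (Poincaré duality). Then: H^{(n+1)/3} ≅ Z₂, H^{(2n−1)/3} ≅ Z₂; H^q = 0 for (n+4)/3 ≤ q ≤ (2n−4)/3 (when n ≥ 8); H^q ≅ H^{q+d} for 1 ≤ q ≤ (n−2)/3; and Σ_q (−1)^q dim H^q = 0. -/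
/-! Since `2d > n`, exactness at `H^{q+d}` and at `H^q` makes `δ : H^{q+d} → H^q` an isomorphism
for `0 ≤ q < d`: the groups `H^{q+2d}` and `H^{q-d}` around it vanish. Everything follows from
these isomorphisms: `H^d ≅ H^0`, `H^k ≅ H^{k+d} = H^n`, `H^q ≅ H^{q+d} = 0` for `k < q < d`,
and, `d` being odd, the terms `q` and `q + d` of the Euler characteristic cancel. -/

open Finset

section ExactOfDegree

variable {R : Type*} [Ring R] {H : ℤ → Type*} [∀ q, AddCommGroup (H q)]
  [∀ q, Module R (H q)] {d : ℤ} (δ : ∀ q, H q →ₗ[R] H (q - d))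
  (hexact : ∀ q, LinearMap.range (δ q) = LinearMap.ker (δ (q - d)))
include hexact

theorem injective_of_exact_of_subsingleton {p m : ℤ} (hpm : p - d = m) [Subsingleton (H p)] :
    Function.Injective (δ m) := by
  subst hpm
  rw [← LinearMap.ker_eq_bot, ← hexact, LinearMap.range_eq_bot]
  exact Subsingleton.elim _ _

theorem surjective_of_exact_of_subsingleton (m : ℤ) [Subsingleton (H (m - d - d))] :
    Function.Surjective (δ m) := by
  rw [← LinearMap.range_eq_top, hexact, LinearMap.ker_eq_top]
  exact Subsingleton.elim _ _

theorem nonempty_linearEquiv_add_of_exact (q : ℤ) [Subsingleton (H (q - d))]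
    [Subsingleton (H (q + d + d))] : Nonempty (H q ≃ₗ[R] H (q + d)) := by
  have : Subsingleton (H (q + d - d - d)) := by rwa [add_sub_cancel_right]
  have hbij : Function.Bijective (δ (q + d)) :=
    ⟨injective_of_exact_of_subsingleton δ hexact (add_sub_cancel_right (q + d) d),
      surjective_of_exact_of_subsingleton δ hexact (q + d)⟩
  exact ⟨((LinearEquiv.ofBijective _ hbij).trans
    (LinearEquiv.cast (add_sub_cancel_right q d))).symm⟩

end ExactOfDegree

theorem sum_Icc_eq_zero_of_antiperiodic {M : Type*} [AddCommGroup M] {f : ℤ → M} {n d : ℤ}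
    (hd : 0 ≤ d) (hnd : n < d + d) (hf : ∀ q ∈ Ico 0 d, f (q + d) = -f q)
    (hzero : ∀ q, n < q → f q = 0) :
    ∑ q ∈ Icc 0 n, f q = 0 := by
  calc ∑ q ∈ Icc 0 n, f q = ∑ q ∈ Ico 0 (d + d), f q := by
        refine sum_subset (fun q hq => ?_) (fun q hq hqn => hzero q ?_)
        · simp only [mem_Icc, mem_Ico] at hq ⊢; omega
        · simp only [mem_Icc, mem_Ico] at hq hqn; omega
    _ = ∑ q ∈ Ico 0 d, f q + ∑ q ∈ Ico 0 d, f (q + d) := by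
        rw [← Ico_union_Ico_eq_Ico hd (le_add_of_nonneg_left hd),
          sum_union (Ico_disjoint_Ico_consecutive 0 d (d + d)), sum_Ico_add', zero_add]
    _ = 0 := by
        rw [← sum_add_distrib]
        exact sum_eq_zero fun q hq => by rw [hf q hq, add_neg_cancel]

theorem stmt_10_general (n k d : ℤ) (hn5 : 5 ≤ n)
    (hk : n + 1 = 3 * k) (hd : 2 * n - 1 = 3 * d)
    (H : ℤ → Type) [∀ q, AddCommGroup (H q)] [∀ q, Module (ZMod 2) (H q)]
    (hlow : ∀ q : ℤ, q < 0 → Subsingleton (H q))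
    (hhigh : ∀ q : ℤ, n < q → Subsingleton (H q))
    (δ : ∀ q : ℤ, H q →ₗ[ZMod 2] H (q - d))
    (hexact : ∀ q : ℤ, LinearMap.range (δ q) = LinearMap.ker (δ (q - d)))
    (h0 : Module.finrank (ZMod 2) (H 0) = 1)
    (hn : Module.finrank (ZMod 2) (H n) = 1) :
    Module.finrank (ZMod 2) (H k) = 1 ∧
    Module.finrank (ZMod 2) (H d) = 1 ∧
    (8 ≤ n → ∀ q : ℤ, k + 1 ≤ q → q ≤ d - 1 → Subsingleton (H q)) ∧
    (∀ q : ℤ, 1 ≤ q → q ≤ k - 1 → Nonempty (H q ≃ₗ[ZMod 2] H (q + d))) ∧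
    ∑ q ∈ Finset.Icc (0 : ℤ) n,
      (-1 : ℤ) ^ q.toNat * (Module.finrank (ZMod 2) (H q) : ℤ) = 0 := by
  have shift_equiv (q : ℤ) (h₀ : 0 ≤ q) (h₁ : q < d) :
      Nonempty (H q ≃ₗ[ZMod 2] H (q + d)) :=
    have := hlow (q - d) (by omega)
    have := hhigh (q + d + d) (by omega)
    nonempty_linearEquiv_add_of_exact δ hexact q
  have finrank_add (q : ℤ) (h₀ : 0 ≤ q) (h₁ : q < d) :
      Module.finrank (ZMod 2) (H (q + d)) = Module.finrank (ZMod 2) (H q) :=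
    (shift_equiv q h₀ h₁).some.finrank_eq.symm
  refine ⟨?_, ?_, ?_, fun q h₁ h₂ => shift_equiv q (by omega) (by omega), ?_⟩
  · rw [← hn, show n = k + d by omega, finrank_add k (by omega) (by omega)]
  · rw [← h0, ← finrank_add 0 le_rfl (by omega), zero_add]
  · intro _ q h₁ h₂
    have := hhigh (q + d) (by omega)
    exact (shift_equiv q (by omega) (by omega)).some.toEquiv.subsingleton
  · have hd_odd : Odd d.toNat := Nat.odd_iff.mpr (by omega)
    refine sum_Icc_eq_zero_of_antiperiodic (d := d) (by omega) (by omega)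
      (fun q hq => ?_) (fun q hq => ?_)
    · rw [mem_Ico] at hq
      rw [finrank_add q hq.1 hq.2, show (q + d).toNat = q.toNat + d.toNat by omega, pow_add,
        hd_odd.neg_one_pow]
      ring
    · have := hhigh q hq
      simp [Module.finrank_zero_of_subsingleton]

/-- Homological rigidity (Proposition 4.7).  Let `(H^q)_{q∈ℤ}` be finite-dimensional
`ℤ₂`-vector spaces, zero for `q < 0` and `q > n`, where `n ≡ 2 (mod 3)`, `n ≥ 5`;
write `n + 1 = 3k` and `2n − 1 = 3d`.  Suppose there are maps `δ_q : H^q → H^{q−d}`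
with `range (δ_q) = ker (δ_{q−d})` for all `q` (the long exact `[∂₁]`-pattern),
`H⁰ ≅ ℤ₂`, `H^n ≅ ℤ₂`, and `dim H^q = dim H^{n−q}` (Poincaré duality).  Then
`H^k ≅ ℤ₂ ≅ H^d`; `H^q = 0` for `k+1 ≤ q ≤ d−1` (when `n ≥ 8`); `H^q ≅ H^{q+d}` for
`1 ≤ q ≤ k−1`; and `Σ_q (−1)^q dim H^q = 0`. -/
theorem stmt_10 (n k d : ℤ) (hn5 : 5 ≤ n) (hmod : n % 3 = 2)
    (hk : n + 1 = 3 * k) (hd : 2 * n - 1 = 3 * d)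
    (H : ℤ → Type) [∀ q, AddCommGroup (H q)] [∀ q, Module (ZMod 2) (H q)]
    [∀ q, Module.Finite (ZMod 2) (H q)]
    (hlow : ∀ q : ℤ, q < 0 → Subsingleton (H q))
    (hhigh : ∀ q : ℤ, n < q → Subsingleton (H q))
    (δ : ∀ q : ℤ, H q →ₗ[ZMod 2] H (q - d))
    (hexact : ∀ q : ℤ, LinearMap.range (δ q) = LinearMap.ker (δ (q - d)))
    (h0 : Module.finrank (ZMod 2) (H 0) = 1)
    (hn : Module.finrank (ZMod 2) (H n) = 1)
    (hpd : ∀ q : ℤ, Module.finrank (ZMod 2) (H q) = Module.finrank (ZMod 2) (H (n - q))) :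
    Module.finrank (ZMod 2) (H k) = 1 ∧
    Module.finrank (ZMod 2) (H d) = 1 ∧
    (8 ≤ n → ∀ q : ℤ, k + 1 ≤ q → q ≤ d - 1 → Subsingleton (H q)) ∧
    (∀ q : ℤ, 1 ≤ q → q ≤ k - 1 → Nonempty (H q ≃ₗ[ZMod 2] H (q + d))) ∧
    ∑ q ∈ Finset.Icc (0 : ℤ) n,
      (-1 : ℤ) ^ q.toNat * (Module.finrank (ZMod 2) (H q) : ℤ) = 0 :=
  stmt_10_general n k d hn5 hk hd H hlow hhigh δ hexact h0 hn
end

section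
/- Let (H^q) be finite-dimensional Z₂-vector spaces, zero outside 0 ≤ q ≤ 8, with H⁰ ≅ H⁸ ≅ Z₂, H¹ = H² = 0, dim H^q = dim H^{8−q} for all q, and such that for every q the three-term sequence H^{q+5} → H^q → H^{q−5} is exact. Then dim H^q = 1 for q ∈ {0,3,5,8} and H^q = 0 otherwise. -/
/-!
Exactness at `H⁵` of `H¹⁰ → H⁵ → H⁰`, with `H¹⁰ = 0`, and at `H⁰` of `H⁵ → H⁰ → H⁻⁵`, with
`H⁻⁵ = 0`, makes `H⁵ → H⁰` an isomorphism, so `dim H⁵ = 1` and by duality `dim H³ = 1`.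
Exactness of `H⁹ → H⁴ → H⁻¹` between zero spaces kills `H⁴`, and duality with `H² = H¹ = 0`
kills `H⁶` and `H⁷`.
-/

namespace Function.Exact

variable {R M N P : Type*} [Ring R] [AddCommGroup M] [AddCommGroup N] [AddCommGroup P]
  [Module R M] [Module R N] [Module R P] {f : M →ₗ[R] N} {g : N →ₗ[R] P}

lemma injective_of_subsingleton_left [Subsingleton M] (h : Exact f g) : Injective g :=
  (LinearMap.injective_iff_eq_zero_of_exact h).mpr <|
    LinearMap.ext fun x => by rw [Subsingleton.elim x 0, map_zero, LinearMap.zero_apply]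

lemma surjective_of_subsingleton_right [Subsingleton P] (h : Exact f g) : Surjective f :=
  (LinearMap.surjective_iff_eq_zero_of_exact h).mpr <| LinearMap.ext fun _ => Subsingleton.elim _ _

lemma subsingleton_of_subsingleton [Subsingleton M] [Subsingleton P] (h : Exact f g) :
    Subsingleton N :=
  h.injective_of_subsingleton_left.subsingleton

end Function.Exact

theorem stmt_11_general (H : ℤ → Type) [∀ q, AddCommGroup (H q)] [∀ q, Module (ZMod 2) (H q)]
    [∀ q, Module.Finite (ZMod 2) (H q)]
    (hout : ∀ q : ℤ, q < 0 ∨ 8 < q → Subsingleton (H q))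
    (h0 : Module.finrank (ZMod 2) (H 0) = 1)
    (h1 : Subsingleton (H 1)) (h2 : Subsingleton (H 2))
    (hpd : ∀ q : ℤ, Module.finrank (ZMod 2) (H q) = Module.finrank (ZMod 2) (H (8 - q)))
    (δ : ∀ q : ℤ, H q →ₗ[ZMod 2] H (q - 5))
    (hexact : ∀ q : ℤ, LinearMap.range (δ q) = LinearMap.ker (δ (q - 5))) :
    ∀ q : ℤ, (q = 0 ∨ q = 3 ∨ q = 5 ∨ q = 8 → Module.finrank (ZMod 2) (H q) = 1) ∧
      (¬ (q = 0 ∨ q = 3 ∨ q = 5 ∨ q = 8) → Subsingleton (H q)) := by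
  have exact q : Function.Exact (δ q) (δ (q - 5)) := LinearMap.exact_iff.mpr (hexact q).symm
  have dual_subsingleton q (hq : Subsingleton (H (8 - q))) : Subsingleton (H q) :=
    Module.finrank_zero_iff.mp ((hpd q).trans Module.finrank_zero_of_subsingleton)
  have : Subsingleton (H 10) := hout 10 (by norm_num)
  have : Subsingleton (H (5 - 5 - 5)) := hout _ (by norm_num)
  have h5 : Module.finrank (ZMod 2) (H 5) = 1 :=
    (LinearEquiv.ofBijective (δ 5) ⟨(exact 10).injective_of_subsingleton_left,
      (exact 5).surjective_of_subsingleton_right⟩).finrank_eq.trans h0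
  have : Subsingleton (H 9) := hout 9 (by norm_num)
  have : Subsingleton (H (9 - 5 - 5)) := hout _ (by norm_num)
  have h4 : Subsingleton (H 4) := (exact 9).subsingleton_of_subsingleton
  have h6 : Subsingleton (H 6) := dual_subsingleton 6 h2
  have h7 : Subsingleton (H 7) := dual_subsingleton 7 h1
  intro q
  refine ⟨?_, fun hq => ?_⟩
  · rintro (rfl | rfl | rfl | rfl)
    exacts [h0, (hpd 3).trans h5, h5, (hpd 8).trans h0]
  · by_cases hq' : q < 0 ∨ 8 < q
    · exact hout q hq'
    obtain ⟨hq0, hq8⟩ : 0 ≤ q ∧ q ≤ 8 := by omega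
    interval_cases q <;> first | assumption | simp at hq

/-- Graded computation in Theorem 1.6(2).  Let `(H^q)` be finite-dimensional
`ℤ₂`-vector spaces, zero outside `0 ≤ q ≤ 8`, with `H⁰ ≅ H⁸ ≅ ℤ₂`, `H¹ = H² = 0`,
`dim H^q = dim H^{8−q}`, and maps `δ_q : H^q → H^{q−5}` with
`range (δ_q) = ker (δ_{q−5})` (exactness of `H^{q+5} → H^q → H^{q−5}`) for every `q`.
Then `dim H^q = 1` for `q ∈ {0,3,5,8}` and `H^q = 0` otherwise. -/
theorem stmt_11 (H : ℤ → Type) [∀ q, AddCommGroup (H q)] [∀ q, Module (ZMod 2) (H q)]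
    [∀ q, Module.Finite (ZMod 2) (H q)]
    (hout : ∀ q : ℤ, q < 0 ∨ 8 < q → Subsingleton (H q))
    (h0 : Module.finrank (ZMod 2) (H 0) = 1)
    (h8 : Module.finrank (ZMod 2) (H 8) = 1)
    (h1 : Subsingleton (H 1)) (h2 : Subsingleton (H 2))
    (hpd : ∀ q : ℤ, Module.finrank (ZMod 2) (H q) = Module.finrank (ZMod 2) (H (8 - q)))
    (δ : ∀ q : ℤ, H q →ₗ[ZMod 2] H (q - 5))
    (hexact : ∀ q : ℤ, LinearMap.range (δ q) = LinearMap.ker (δ (q - 5))) :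
    ∀ q : ℤ, (q = 0 ∨ q = 3 ∨ q = 5 ∨ q = 8 → Module.finrank (ZMod 2) (H q) = 1) ∧
      (¬ (q = 0 ∨ q = 3 ∨ q = 5 ∨ q = 8) → Subsingleton (H q)) :=
  stmt_11_general H hout h0 h1 h2 hpd δ hexact
end

section
/- Let (H^q) be finite-dimensional Z₂-vector spaces, zero outside 0 ≤ q ≤ 26, with H⁰ ≅ H^{26} ≅ Z₂, H¹ = H² = H³ = H⁴ = 0, dim H^q = dim H^{26−q}, and for every q the sequence H^{q+17} → H^q → H^{q−17} is exact. Then dim H^q = 1 for q ∈ {0,9,17,26} and H^q = 0 otherwise. -/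
/-!
Exactness of `H^{q+17} → H^q → H^{q-17}` forces `H^q = 0` when both `H^{q±17}` vanish, and makes
`δ : H^{q+17} → H^q` an isomorphism when `H^{q+34}` and `H^{q-17}` vanish. As `H` is concentrated
in `[0, 26]`, this gives `H^q = 0` for `10 ≤ q ≤ 16` and `dim H^{q+17} = dim H^q` for `0 ≤ q ≤ 9`;
with `H^1 = ⋯ = H^4 = 0` and the duality `q ↦ 26 - q`, every other dimension follows.
-/

section GradedExact

variable {R : Type*} [Ring R] {H : ℤ → Type*} [∀ q, AddCommGroup (H q)] [∀ q, Module R (H q)]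
  {n : ℤ} {δ : ∀ q, H q →ₗ[R] H (q - n)}

theorem injective_of_exact_of_subsingleton_s12
    (hexact : ∀ q, LinearMap.range (δ q) = LinearMap.ker (δ (q - n))) {q : ℤ}
    (h : Subsingleton (H (q + n))) : Function.Injective (δ q) := by
  have hker : LinearMap.ker (δ (q + n - n)) = ⊥ := by
    rw [← hexact, LinearMap.range_eq_bot.mpr (Subsingleton.elim _ 0)]
  rw [add_sub_cancel_right] at hker
  exact LinearMap.ker_eq_bot.mp hker

theorem surjective_of_exact_of_subsingleton_s12
    (hexact : ∀ q, LinearMap.range (δ q) = LinearMap.ker (δ (q - n))) {q : ℤ}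
    (h : Subsingleton (H (q - n - n))) : Function.Surjective (δ q) := by
  rw [← LinearMap.range_eq_top, hexact, LinearMap.ker_eq_top.mpr (Subsingleton.elim _ 0)]

theorem subsingleton_of_exact
    (hexact : ∀ q, LinearMap.range (δ q) = LinearMap.ker (δ (q - n))) {q : ℤ}
    (hup : Subsingleton (H (q + n))) (hdown : Subsingleton (H (q - n))) : Subsingleton (H q) :=
  (injective_of_exact_of_subsingleton_s12 hexact hup).subsingleton

theorem finrank_eq_of_exact
    (hexact : ∀ q, LinearMap.range (δ q) = LinearMap.ker (δ (q - n))) {q : ℤ}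
    (hup : Subsingleton (H (q + n + n))) (hdown : Subsingleton (H (q - n))) :
    Module.finrank R (H (q + n)) = Module.finrank R (H q) := by
  have hdown' : Subsingleton (H (q + n - n - n)) := by rwa [add_sub_cancel_right]
  have e := (LinearEquiv.ofBijective (δ (q + n))
    ⟨injective_of_exact_of_subsingleton_s12 hexact hup,
      surjective_of_exact_of_subsingleton_s12 hexact hdown'⟩).finrank_eq
  rwa [add_sub_cancel_right] at e

end GradedExact

theorem betti_eq_of_shift_seventeen (b : ℤ → ℕ) (hout : ∀ q, q < 0 ∨ 26 < q → b q = 0)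
    (h0 : b 0 = 1) (hlow : ∀ q, 1 ≤ q → q ≤ 4 → b q = 0) (hmid : ∀ q, 10 ≤ q → q ≤ 16 → b q = 0)
    (hshift : ∀ q, 0 ≤ q → q ≤ 9 → b (q + 17) = b q) (hpd : ∀ q, b q = b (26 - q)) (q : ℤ) :
    b q = if q = 0 ∨ q = 9 ∨ q = 17 ∨ q = 26 then 1 else 0 := by
  have h17 : b 17 = 1 := (hshift 0 le_rfl (by norm_num)).trans h0
  have h18_21 : ∀ q, 18 ≤ q → q ≤ 21 → b q = 0 := by
    intro q hl hr
    obtain ⟨p, rfl⟩ : ∃ p, q = p + 17 := ⟨q - 17, by ring⟩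
    rw [hshift p (by omega) (by omega), hlow p (by omega) (by omega)]
  have h5_8 : ∀ q, 5 ≤ q → q ≤ 8 → b q = 0 := fun q hl hr => by
    rw [hpd, h18_21 _ (by omega) (by omega)]
  have h22_25 : ∀ q, 22 ≤ q → q ≤ 25 → b q = 0 := by
    intro q hl hr
    obtain ⟨p, rfl⟩ : ∃ p, q = p + 17 := ⟨q - 17, by ring⟩
    rw [hshift p (by omega) (by omega), h5_8 p (by omega) (by omega)]
  have h9 : b 9 = 1 := (hpd 9).trans h17
  have h26 : b 26 = 1 := (hpd 26).trans h0
  split_ifs with hq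
  · rcases hq with rfl | rfl | rfl | rfl <;> assumption
  · rcases (by omega : q < 0 ∨ 26 < q ∨ (1 ≤ q ∧ q ≤ 4) ∨ (5 ≤ q ∧ q ≤ 8) ∨
        (10 ≤ q ∧ q ≤ 16) ∨ (18 ≤ q ∧ q ≤ 21) ∨ (22 ≤ q ∧ q ≤ 25)) with
      h | h | ⟨hl, hr⟩ | ⟨hl, hr⟩ | ⟨hl, hr⟩ | ⟨hl, hr⟩ | ⟨hl, hr⟩
    exacts [hout q (.inl h), hout q (.inr h), hlow q hl hr, h5_8 q hl hr, hmid q hl hr,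
      h18_21 q hl hr, h22_25 q hl hr]

theorem stmt_12_general (H : ℤ → Type) [∀ q, AddCommGroup (H q)] [∀ q, Module (ZMod 2) (H q)]
    [∀ q, Module.Finite (ZMod 2) (H q)]
    (hout : ∀ q : ℤ, q < 0 ∨ 26 < q → Subsingleton (H q))
    (h0 : Module.finrank (ZMod 2) (H 0) = 1)
    (h1 : Subsingleton (H 1)) (h2 : Subsingleton (H 2))
    (h3 : Subsingleton (H 3)) (h4 : Subsingleton (H 4))
    (hpd : ∀ q : ℤ, Module.finrank (ZMod 2) (H q) = Module.finrank (ZMod 2) (H (26 - q)))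
    (δ : ∀ q : ℤ, H q →ₗ[ZMod 2] H (q - 17))
    (hexact : ∀ q : ℤ, LinearMap.range (δ q) = LinearMap.ker (δ (q - 17))) :
    ∀ q : ℤ, (q = 0 ∨ q = 9 ∨ q = 17 ∨ q = 26 → Module.finrank (ZMod 2) (H q) = 1) ∧
      (¬ (q = 0 ∨ q = 9 ∨ q = 17 ∨ q = 26) → Subsingleton (H q)) := by
  have hzero : ∀ q, Subsingleton (H q) → Module.finrank (ZMod 2) (H q) = 0 :=
    fun q _ => Module.finrank_zero_of_subsingleton
  have hlow : ∀ q : ℤ, 1 ≤ q → q ≤ 4 → Module.finrank (ZMod 2) (H q) = 0 := by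
    intro q hl hr
    interval_cases q <;> apply hzero <;> assumption
  have hmid : ∀ q : ℤ, 10 ≤ q → q ≤ 16 → Module.finrank (ZMod 2) (H q) = 0 :=
    fun q hl hr => hzero q <|
      subsingleton_of_exact hexact (hout _ (by omega)) (hout _ (by omega))
  have hshift : ∀ q : ℤ, 0 ≤ q → q ≤ 9 →
      Module.finrank (ZMod 2) (H (q + 17)) = Module.finrank (ZMod 2) (H q) :=
    fun q hl hr => finrank_eq_of_exact hexact (hout _ (by omega)) (hout _ (by omega))
  have hbetti := betti_eq_of_shift_seventeen (fun q => Module.finrank (ZMod 2) (H q))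
    (fun q hq => hzero q (hout q hq)) h0 hlow hmid hshift hpd
  intro q
  refine ⟨fun hq => by simpa [hq] using hbetti q, fun hq => ?_⟩
  exact Module.finrank_zero_iff.mp (by simpa [hq] using hbetti q)

/-- Graded computation in Theorem 1.6(3).  Let `(H^q)` be finite-dimensional
`ℤ₂`-vector spaces, zero outside `0 ≤ q ≤ 26`, with `H⁰ ≅ H²⁶ ≅ ℤ₂`,
`H¹ = H² = H³ = H⁴ = 0`, `dim H^q = dim H^{26−q}`, and maps `δ_q : H^q → H^{q−17}` with
`range (δ_q) = ker (δ_{q−17})` (exactness of `H^{q+17} → H^q → H^{q−17}`) for every `q`.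
Then `dim H^q = 1` for `q ∈ {0,9,17,26}` and `H^q = 0` otherwise. -/
theorem stmt_12 (H : ℤ → Type) [∀ q, AddCommGroup (H q)] [∀ q, Module (ZMod 2) (H q)]
    [∀ q, Module.Finite (ZMod 2) (H q)]
    (hout : ∀ q : ℤ, q < 0 ∨ 26 < q → Subsingleton (H q))
    (h0 : Module.finrank (ZMod 2) (H 0) = 1)
    (h26 : Module.finrank (ZMod 2) (H 26) = 1)
    (h1 : Subsingleton (H 1)) (h2 : Subsingleton (H 2))
    (h3 : Subsingleton (H 3)) (h4 : Subsingleton (H 4))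
    (hpd : ∀ q : ℤ, Module.finrank (ZMod 2) (H q) = Module.finrank (ZMod 2) (H (26 - q)))
    (δ : ∀ q : ℤ, H q →ₗ[ZMod 2] H (q - 17))
    (hexact : ∀ q : ℤ, LinearMap.range (δ q) = LinearMap.ker (δ (q - 17))) :
    ∀ q : ℤ, (q = 0 ∨ q = 9 ∨ q = 17 ∨ q = 26 → Module.finrank (ZMod 2) (H q) = 1) ∧
      (¬ (q = 0 ∨ q = 9 ∨ q = 17 ∨ q = 26) → Subsingleton (H q)) :=
  stmt_12_general H hout h0 h1 h2 h3 h4 hpd δ hexact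
end
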